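/- The zero control is the unique equilibrium: any Borel measurable α* : [0,1] → [-1,1] satisfying the equilibrium condition for the cost J(t,α) = ∫_t^1 c(s)·α(s)·(∫_s^1 α(r) dr) ds must satisfy ∫_t^1 α*(r) dr = 0 for all t ∈ [0,1], hence α* = 0 a.e. -/

import Mathlib

open MeasureTheory Set Filter

noncomputable def tn (n : ℕ) : ℝ := 1 - 1 / 2 ^ n
noncomputable def sn (n : ℕ) : ℝ := (tn n + 3 * tn (n + 1)) / 4
noncomputable def c (x : ℝ) : ℝ :=
  ∑' n : ℕ, ((Ico (tn n) (sn n)).indicator (fun _ => (1 : ℝ)) x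
    + 6 * (Ico (sn n) (tn (n + 1))).indicator (fun _ => (1 : ℝ)) x)
noncomputable def J (t : ℝ) (α : ℝ → ℝ) : ℝ :=
  ∫ s in t..1, c s * α s * ∫ r in s..1, α r

def IsEquilibrium (αs : ℝ → ℝ) : Prop :=
  ∀ t ∈ Ico (0 : ℝ) 1, ∀ α : ℝ → ℝ, Measurable α → (∀ x, α x ∈ Icc (-1 : ℝ) 1) →
    0 ≤ liminf
      (fun δ : ℝ => (J t (fun x => if x < t + δ then α x else αs x) - J t αs) / δ)
      (nhdsWithin 0 (Ioi 0))

/-!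
Write `F t = ∫ r in t..1, α* r`. Switching the control to `-1` on `[t, t + δ)` changes `J t` by
`-F t * ∫ s in t..t+δ, c s * (1 + α* s) + O(δ²)`, and `c ≥ 1` on `[0, 1)`. So if `F t > 0`, the
equilibrium condition forces `∫ s in t..t+δ, α* s < 0` for some small `δ`, i.e. `F (t + δ) > F t`:
`F` cannot attain a positive maximum on `[t, 1]`, whence `F ≤ 0`. As `J t (-α) = J t α`, `-α*` is
an equilibrium too, so `F ≡ 0` on `[0, 1]`, and Lebesgue differentiation gives `α* = 0` a.e.
-/

open Topology

lemma tn_strictMono : StrictMono tn :=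
  strictMono_nat_of_lt_succ fun n => by
    simp only [tn]
    gcongr
    · norm_num
    · exact n.lt_succ_self

lemma Ico_tn_subset_Ico (n : ℕ) : Ico (tn n) (tn (n + 1)) ⊆ Ico 0 1 :=
  Ico_subset_Ico (by simpa [tn] using tn_strictMono.monotone n.zero_le)
    (by simp only [tn]; linarith [show 0 < 1 / (2 : ℝ) ^ (n + 1) by positivity])

lemma exists_mem_Ico_tn {x : ℝ} (hx : x ∈ Ico (0 : ℝ) 1) : ∃ n, x ∈ Ico (tn n) (tn (n + 1)) := by
  have hpos : 0 < 1 - x := by linarith [hx.2]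
  obtain ⟨n, h₁, h₂⟩ := exists_nat_pow_near (x := 1 / (1 - x)) (y := (2 : ℝ))
    ((one_le_div hpos).2 (by linarith [hx.1])) one_lt_two
  rw [le_div_iff₀ hpos] at h₁
  rw [div_lt_iff₀ hpos] at h₂
  refine ⟨n, ?_, ?_⟩ <;> simp only [tn]
  · rw [sub_le_comm, le_div_iff₀ (by positivity)]; linarith
  · rw [lt_sub_comm, div_lt_iff₀ (by positivity)]; linarith

noncomputable def cTerm (n : ℕ) (x : ℝ) : ℝ :=
  (Ico (tn n) (sn n)).indicator (fun _ => 1) x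
    + 6 * (Ico (sn n) (tn (n + 1))).indicator (fun _ => 1) x

lemma cTerm_eq_zero {n : ℕ} {x : ℝ} (hx : x ∉ Ico (tn n) (tn (n + 1))) : cTerm n x = 0 := by
  have := tn_strictMono n.lt_succ_self
  rw [cTerm, indicator_of_notMem fun h => hx (Ico_subset_Ico_right (by rw [sn]; linarith) h),
    indicator_of_notMem fun h => hx (Ico_subset_Ico_left (by rw [sn]; linarith) h)]
  norm_num

lemma abs_cTerm_le (n : ℕ) (x : ℝ) : |cTerm n x| ≤ 7 := by
  simp only [cTerm, indicator_apply]
  split_ifs <;> norm_num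

lemma one_le_cTerm {n : ℕ} {x : ℝ} (hx : x ∈ Ico (tn n) (tn (n + 1))) : 1 ≤ cTerm n x := by
  simp only [cTerm, indicator_apply, mem_Ico]
  split_ifs with h₁ h₂ h₂ <;> try norm_num
  exact (lt_or_ge x (sn n)).elim (fun h => h₁ ⟨hx.1, h⟩) fun h => h₂ ⟨h, hx.2⟩

lemma c_eq_cTerm {n : ℕ} {x : ℝ} (hx : x ∈ Ico (tn n) (tn (n + 1))) : c x = cTerm n x :=
  tsum_eq_single n fun _ hm => cTerm_eq_zero fun h =>
    (tn_strictMono.monotone.pairwise_disjoint_on_Ico_succ hm).ne_of_mem h hx rfl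

lemma c_eq_zero {x : ℝ} (hx : x ∉ Ico (0 : ℝ) 1) : c x = 0 :=
  (tsum_congr fun n => cTerm_eq_zero fun h => hx (Ico_tn_subset_Ico n h)).trans tsum_zero

lemma measurable_c : Measurable c :=
  Measurable.tsum fun _ =>
    (measurable_const.indicator measurableSet_Ico).add
      (measurable_const.mul (measurable_const.indicator measurableSet_Ico))

lemma abs_c_le (x : ℝ) : |c x| ≤ 7 := by
  by_cases hx : x ∈ Ico (0 : ℝ) 1
  · obtain ⟨n, hn⟩ := exists_mem_Ico_tn hx
    rw [c_eq_cTerm hn]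
    exact abs_cTerm_le n x
  · rw [c_eq_zero hx]
    norm_num

lemma one_le_c {x : ℝ} (hx : x ∈ Ico (0 : ℝ) 1) : 1 ≤ c x := by
  obtain ⟨n, hn⟩ := exists_mem_Ico_tn hx
  rw [c_eq_cTerm hn]
  exact one_le_cTerm hn

lemma abs_c_mul_one_add_le {α : ℝ → ℝ} (hα1 : ∀ x, |α x| ≤ 1) (x : ℝ) :
    |c x * (1 + α x)| ≤ 7 * 2 := by
  rw [abs_mul]
  exact mul_le_mul (abs_c_le x) ((abs_add_le _ _).trans (by rw [abs_one]; linarith [hα1 x]))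
    (abs_nonneg _) (by norm_num)

lemma intervalIntegrable_of_abs_le {f : ℝ → ℝ} {C : ℝ} (hf : Measurable f) (h : ∀ x, |f x| ≤ C)
    (a b : ℝ) : IntervalIntegrable f volume a b :=
  (intervalIntegrable_const (c := C)).mono_fun hf.aestronglyMeasurable
    (ae_of_all _ fun x => by simpa using (h x).trans (le_abs_self C))

lemma integral_sub_integral_eq {f : ℝ → ℝ} (hf : ∀ a b, IntervalIntegrable f volume a b)
    (a b u : ℝ) : (∫ r in a..u, f r) - ∫ r in b..u, f r = ∫ r in a..b, f r := by
  rw [← intervalIntegral.integral_add_adjacent_intervals (hf a b) (hf b u)]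
  ring

lemma abs_integral_sub_integral_le {f : ℝ → ℝ} (hf : Measurable f) (hf1 : ∀ x, |f x| ≤ 1)
    (a b u : ℝ) : |(∫ r in a..u, f r) - ∫ r in b..u, f r| ≤ |a - b| := by
  rw [integral_sub_integral_eq (intervalIntegrable_of_abs_le hf hf1), abs_sub_comm a b,
    ← one_mul |b - a|]
  exact intervalIntegral.norm_integral_le_of_norm_le_const fun x _ =>
    (Real.norm_eq_abs _).trans_le (hf1 x)

lemma continuous_integral_left {f : ℝ → ℝ} (hf : Measurable f) (hf1 : ∀ x, |f x| ≤ 1) (u : ℝ) :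
    Continuous fun a => ∫ r in a..u, f r :=
  (LipschitzWith.of_dist_le_mul (K := 1) fun a b => by
    simpa [Real.dist_eq] using abs_integral_sub_integral_le hf hf1 a b u).continuous

lemma integral_congr_of_eqOn_Ici {α β : ℝ → ℝ} {τ s u : ℝ} (h : EqOn β α (Ici τ))
    (hs : τ ≤ s) (hu : τ ≤ u) : ∫ r in s..u, β r = ∫ r in s..u, α r :=
  intervalIntegral.integral_congr fun _ hx => h ((le_inf hs hu).trans hx.1)

lemma intervalIntegrable_J_integrand {β : ℝ → ℝ} (hβ : Measurable β) (hβ1 : ∀ x, |β x| ≤ 1)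
    (a b : ℝ) : IntervalIntegrable (fun s => c s * β s * ∫ r in s..1, β r) volume a b := by
  refine IntervalIntegrable.mul_continuousOn (intervalIntegrable_of_abs_le (C := 7)
    (measurable_c.mul hβ) (fun x => ?_) a b) (continuous_integral_left hβ hβ1 1).continuousOn
  rw [Pi.mul_apply, abs_mul, ← mul_one 7]
  exact mul_le_mul (abs_c_le x) (hβ1 x) (abs_nonneg _) (by norm_num)

lemma J_sub_J_eq_integral {α β : ℝ → ℝ} (hα : Measurable α) (hα1 : ∀ x, |α x| ≤ 1)
    (hβ : Measurable β) (hβ1 : ∀ x, |β x| ≤ 1) {t τ : ℝ} (hτ : τ ≤ 1)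
    (hβα : EqOn β α (Ici τ)) :
    J t β - J t α =
      ∫ s in t..τ, c s * β s * (∫ r in s..1, β r) - c s * α s * ∫ r in s..1, α r := by
  have htail : (∫ s in τ..1, c s * β s * ∫ r in s..1, β r)
      = ∫ s in τ..1, c s * α s * ∫ r in s..1, α r :=
    integral_congr_of_eqOn_Ici (fun s hs => by
      rw [hβα hs, integral_congr_of_eqOn_Ici hβα hs hτ]) le_rfl hτ
  rw [J, J, ← intervalIntegral.integral_add_adjacent_intervals
      (intervalIntegrable_J_integrand hβ hβ1 t τ) (intervalIntegrable_J_integrand hβ hβ1 τ 1),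
    ← intervalIntegral.integral_add_adjacent_intervals
      (intervalIntegrable_J_integrand hα hα1 t τ) (intervalIntegrable_J_integrand hα hα1 τ 1),
    htail, intervalIntegral.integral_sub (intervalIntegrable_J_integrand hβ hβ1 t τ)
      (intervalIntegrable_J_integrand hα hα1 t τ)]
  ring

lemma abs_J_sub_J_sub_mul_integral_le {α β : ℝ → ℝ} (hα : Measurable α) (hα1 : ∀ x, |α x| ≤ 1)
    (hβ : Measurable β) (hβ1 : ∀ x, |β x| ≤ 1) {t τ : ℝ} (htτ : t ≤ τ) (hτ : τ ≤ 1)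
    (hβα : EqOn β α (Ici τ)) :
    |J t β - J t α - (∫ r in t..1, α r) * ∫ s in t..τ, c s * (β s - α s)|
      ≤ 21 * (τ - t) ^ 2 := by
  set F := fun s => ∫ r in s..1, α r
  set G := fun s => ∫ r in s..1, β r
  have hFt : ∀ s ∈ Icc t τ, |F s - F t| ≤ τ - t := fun s hs =>
    (abs_integral_sub_integral_le hα hα1 s t 1).trans
      (by rw [abs_of_nonneg (sub_nonneg.2 hs.1)]; linarith [hs.2])
  have hGt : ∀ s ∈ Icc t τ, |G s - F t| ≤ 2 * (τ - t) := fun s hs => by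
    have hGτ : G τ = F τ := integral_congr_of_eqOn_Ici hβα le_rfl hτ
    have hGs : |G s - G τ| ≤ τ - t :=
      (abs_integral_sub_integral_le hβ hβ1 s τ 1).trans
        (by rw [abs_sub_comm, abs_of_nonneg (sub_nonneg.2 hs.2)]; linarith [hs.1])
    calc |G s - F t| = |(G s - G τ) + (F τ - F t)| := by rw [hGτ]; ring_nf
      _ ≤ |G s - G τ| + |F τ - F t| := abs_add_le _ _
      _ ≤ 2 * (τ - t) := by linarith [hFt τ ⟨htτ, le_rfl⟩]
  have hlin : IntervalIntegrable (fun s => F t * (c s * (β s - α s))) volume t τ :=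
    (intervalIntegrable_of_abs_le (C := 7 * (1 + 1)) (measurable_c.mul (hβ.sub hα)) (fun x => by
      rw [Pi.mul_apply, Pi.sub_apply, abs_mul]
      exact mul_le_mul (abs_c_le x) ((abs_sub _ _).trans (add_le_add (hβ1 x) (hα1 x)))
        (abs_nonneg _) (by norm_num)) t τ).const_mul _
  rw [J_sub_J_eq_integral hα hα1 hβ hβ1 hτ hβα, ← intervalIntegral.integral_const_mul,
    ← intervalIntegral.integral_sub ((intervalIntegrable_J_integrand hβ hβ1 t τ).sub
      (intervalIntegrable_J_integrand hα hα1 t τ)) hlin,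
    sq, ← mul_assoc, ← abs_of_nonneg (sub_nonneg.2 htτ), ← Real.norm_eq_abs]
  refine intervalIntegral.norm_integral_le_of_norm_le_const fun s hs => ?_
  have hs' : s ∈ Icc t τ := Ioc_subset_Icc_self (uIoc_of_le htτ ▸ hs)
  have hsplit : |β s * (G s - F t) - α s * (F s - F t)| ≤ 3 * |τ - t| := by
    rw [abs_of_nonneg (sub_nonneg.2 htτ)]
    calc _ ≤ |β s * (G s - F t)| + |α s * (F s - F t)| := abs_sub _ _
      _ ≤ 1 * (2 * (τ - t)) + 1 * (τ - t) := by
        rw [abs_mul, abs_mul]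
        gcongr
        exacts [hβ1 s, hGt s hs', hα1 s, hFt s hs']
      _ = 3 * (τ - t) := by ring
  calc ‖c s * β s * G s - c s * α s * F s - F t * (c s * (β s - α s))‖
      = |c s| * |β s * (G s - F t) - α s * (F s - F t)| := by
        rw [Real.norm_eq_abs, ← abs_mul]; ring_nf
    _ ≤ 7 * (3 * |τ - t|) := mul_le_mul (abs_c_le s) hsplit (abs_nonneg _) (by norm_num)
    _ = 21 * |τ - t| := by ring

lemma abs_J_spike_sub_J_add_mul_integral_le {α : ℝ → ℝ} (hα : Measurable α)
    (hα1 : ∀ x, |α x| ≤ 1) {t δ : ℝ} (hδ : 0 ≤ δ) (htδ : t + δ ≤ 1) :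
    |J t (fun x => if x < t + δ then -1 else α x) - J t α
        + (∫ r in t..1, α r) * ∫ s in t..t + δ, c s * (1 + α s)| ≤ 21 * δ ^ 2 := by
  have hspike : (∫ s in t..t + δ, c s * ((if s < t + δ then -1 else α s) - α s))
      = -∫ s in t..t + δ, c s * (1 + α s) := by
    rw [← intervalIntegral.integral_neg]
    exact intervalIntegral.integral_congr_Ioo_of_le (by linarith) fun s hs => by
      simp only [if_pos hs.2]; ring
  have h := abs_J_sub_J_sub_mul_integral_le (t := t) (τ := t + δ)
    (β := fun x => if x < t + δ then -1 else α x) hα hα1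
    (Measurable.ite measurableSet_Iio measurable_const hα)
    (fun x => by split_ifs <;> simp [hα1 x]) (by linarith) htδ
    fun x hx => if_neg (not_lt.2 hx)
  rwa [hspike, add_sub_cancel_left, mul_neg, sub_neg_eq_add] at h

lemma le_J_spike_sub_J_div {α : ℝ → ℝ} (hα : Measurable α) (hα1 : ∀ x, |α x| ≤ 1)
    {t δ : ℝ} (ht : 0 ≤ t) (hδ : 0 < δ) (htδ : t + δ ≤ 1) :
    -35 ≤ (J t (fun x => if x < t + δ then -1 else α x) - J t α) / δ := by
  have hF : |∫ r in t..1, α r| ≤ 1 := by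
    have := intervalIntegral.norm_integral_le_of_norm_le_const (a := t) (b := 1)
      fun s _ => (Real.norm_eq_abs _).trans_le (hα1 s)
    rw [Real.norm_eq_abs, abs_of_nonneg (show (0 : ℝ) ≤ 1 - t by linarith)] at this
    linarith
  have hI : |∫ s in t..t + δ, c s * (1 + α s)| ≤ 14 * δ := by
    have := intervalIntegral.norm_integral_le_of_norm_le_const (a := t) (b := t + δ)
      fun s _ => (Real.norm_eq_abs _).trans_le (abs_c_mul_one_add_le hα1 s)
    rw [add_sub_cancel_left, abs_of_nonneg hδ.le, Real.norm_eq_abs] at this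
    linarith
  have hFI := abs_mul (∫ r in t..1, α r) (∫ s in t..t + δ, c s * (1 + α s)) ▸
    mul_le_mul hF hI (abs_nonneg _) zero_le_one
  have hδ2 : δ ^ 2 ≤ δ := by nlinarith
  rw [le_div_iff₀ hδ]
  linarith [(abs_le.1 (abs_J_spike_sub_J_add_mul_integral_le hα hα1 hδ.le htδ)).1,
    le_abs_self ((∫ r in t..1, α r) * ∫ s in t..t + δ, c s * (1 + α s))]

lemma integral_neg_of_integral_c_mul_one_add_lt {α : ℝ → ℝ} (hα : Measurable α)
    (hα1 : ∀ x, |α x| ≤ 1) {t δ : ℝ} (ht : 0 ≤ t) (hδ : 0 ≤ δ) (htδ : t + δ < 1)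
    (h : ∫ s in t..t + δ, c s * (1 + α s) < δ) : ∫ s in t..t + δ, α s < 0 := by
  have hαi := intervalIntegrable_of_abs_le hα hα1 t (t + δ)
  have hle : ∫ s in t..t + δ, (1 + α s) ≤ ∫ s in t..t + δ, c s * (1 + α s) :=
    intervalIntegral.integral_mono_on (by linarith) (intervalIntegrable_const.add hαi)
      (intervalIntegrable_of_abs_le (measurable_c.mul (measurable_const.add hα))
        (abs_c_mul_one_add_le hα1) t (t + δ))
      fun s hs => le_mul_of_one_le_left (by linarith [neg_abs_le (α s), hα1 s])
        (one_le_c ⟨by linarith [hs.1], by linarith [hs.2]⟩)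
  rw [intervalIntegral.integral_add intervalIntegrable_const hαi, intervalIntegral.integral_const,
    smul_eq_mul, mul_one, add_sub_cancel_left] at hle
  linarith

lemma exists_integral_lt_of_isEquilibrium {α : ℝ → ℝ} (hα : Measurable α)
    (hα1 : ∀ x, |α x| ≤ 1) (heq : IsEquilibrium α) {t : ℝ} (ht : t ∈ Ico (0 : ℝ) 1)
    (hF : 0 < ∫ r in t..1, α r) : ∃ τ ∈ Ioc t 1, (∫ r in t..1, α r) < ∫ r in τ..1, α r := by
  set F := ∫ r in t..1, α r
  set q := fun δ : ℝ => (J t (fun x => if x < t + δ then -1 else α x) - J t α) / δ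
  -- Without a lower bound on `q` its `liminf` would be the junk value `0`.
  have hbdd : IsBoundedUnder (· ≥ ·) (𝓝[>] 0) q := by
    refine isBoundedUnder_of_eventually_ge (a := -35) ?_
    filter_upwards [Ioo_mem_nhdsGT (sub_pos.2 ht.2)] with δ hδ
    exact le_J_spike_sub_J_div hα hα1 ht.1 hδ.1 (by linarith [hδ.2])
  have hev : ∀ᶠ δ in 𝓝[>] 0, -(F / 2) < q δ :=
    eventually_lt_of_lt_liminf ((neg_neg_of_pos (half_pos hF)).trans_le
      (heq t ht (fun _ => -1) measurable_const fun _ => ⟨le_rfl, by norm_num⟩)) hbdd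
  obtain ⟨δ, hqδ, hδ⟩ :=
    (hev.and (Ioo_mem_nhdsGT (lt_min (sub_pos.2 ht.2) (by positivity : 0 < F / 42)))).exists
  have htδ : t + δ < 1 := by linarith [hδ.2.trans_le (min_le_left _ _)]
  have hIδ : ∫ s in t..t + δ, c s * (1 + α s) < δ := by
    have h1 := (abs_le.1 (abs_J_spike_sub_J_add_mul_integral_le hα hα1 hδ.1.le htδ.le)).2
    have h2 := (lt_div_iff₀ hδ.1).1 hqδ
    have h3 := mul_lt_mul_of_pos_left (hδ.2.trans_le (min_le_right _ _)) hδ.1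
    exact lt_of_mul_lt_mul_left (by nlinarith : F * _ < F * δ) hF.le
  refine ⟨t + δ, ⟨by linarith [hδ.1], htδ.le⟩, ?_⟩
  linarith [integral_neg_of_integral_c_mul_one_add_lt hα hα1 ht.1 hδ.1.le htδ hIδ,
    integral_sub_integral_eq (intervalIntegrable_of_abs_le hα hα1) t (t + δ) 1]

lemma integral_nonpos_of_isEquilibrium {α : ℝ → ℝ} (hα : Measurable α)
    (hα1 : ∀ x, |α x| ≤ 1) (heq : IsEquilibrium α) {t : ℝ} (ht : t ∈ Icc (0 : ℝ) 1) :
    ∫ r in t..1, α r ≤ 0 := by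
  by_contra! hpos
  obtain ⟨m, hm, hmax⟩ := isCompact_Icc.exists_isMaxOn (nonempty_Icc.2 ht.2)
    (continuous_integral_left hα hα1 1).continuousOn
  have hFm : 0 < ∫ r in m..1, α r := hpos.trans_le (isMaxOn_iff.1 hmax t (left_mem_Icc.2 ht.2))
  have hm1 : m < 1 := hm.2.lt_of_ne (by rintro rfl; simp at hFm)
  obtain ⟨τ, hτ, hlt⟩ := exists_integral_lt_of_isEquilibrium hα hα1 heq ⟨ht.1.trans hm.1, hm1⟩ hFm
  exact (isMaxOn_iff.1 hmax τ ⟨hm.1.trans hτ.1.le, hτ.2⟩).not_gt hlt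

lemma J_neg (t : ℝ) (α : ℝ → ℝ) : J t (fun x => -α x) = J t α := by
  simp only [J, intervalIntegral.integral_neg, mul_neg, neg_mul, neg_neg]

lemma IsEquilibrium.neg {α : ℝ → ℝ} (h : IsEquilibrium α) : IsEquilibrium fun x => -α x := by
  intro t ht β hβ hβ1
  have hdev : ∀ δ, (fun x => if x < t + δ then β x else -α x)
      = fun x => -(if x < t + δ then -β x else α x) := fun δ => by
    funext x; split_ifs <;> simp
  simpa only [hdev, J_neg] using h t ht (fun x => -β x) hβ.neg
    fun x => ⟨by linarith [(hβ1 x).2], by linarith [(hβ1 x).1]⟩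

lemma ae_eq_zero_of_forall_integral_eq_zero {f : ℝ → ℝ} {a b : ℝ}
    (hf : IntervalIntegrable f volume a b) (h : ∀ t ∈ Icc a b, ∫ x in t..b, f x = 0) :
    ∀ᵐ x ∂volume.restrict (Icc a b), f x = 0 := by
  rw [← Measure.restrict_congr_set Ioo_ae_eq_Icc, ae_restrict_iff' measurableSet_Ioo]
  filter_upwards [hf.ae_hasDerivAt_integral] with x hx hxab
  have hab : a ≤ b := (hxab.1.trans hxab.2).le
  have hzero : (fun _ => (0 : ℝ)) =ᶠ[𝓝 x] fun y => ∫ r in a..y, f r := by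
    filter_upwards [Ioo_mem_nhds hxab.1 hxab.2] with y hy
    have hy' : y ∈ Icc a b := Ioo_subset_Icc_self hy
    have := intervalIntegral.integral_interval_sub_left hf
      (hf.mono_set (uIcc_subset_uIcc left_mem_uIcc (uIcc_of_le hab ▸ hy')))
    rw [h a (left_mem_Icc.2 hab), h y hy'] at this
    linarith
  exact ((hx (uIcc_of_le hab ▸ Ioo_subset_Icc_self hxab) a left_mem_uIcc).congr_of_eventuallyEq
    hzero).unique (hasDerivAt_const x 0)

theorem stmt5 (αs : ℝ → ℝ) (hαs : Measurable αs) (hb : ∀ x, αs x ∈ Icc (-1 : ℝ) 1)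
    (heq : IsEquilibrium αs) :
    (∀ t ∈ Icc (0 : ℝ) 1, (∫ r in t..1, αs r) = 0) ∧
      ∀ᵐ x ∂(volume.restrict (Icc (0 : ℝ) 1)), αs x = 0 := by
  have hα1 : ∀ x, |αs x| ≤ 1 := fun x => abs_le.2 (hb x)
  have hzero : ∀ t ∈ Icc (0 : ℝ) 1, (∫ r in t..1, αs r) = 0 := fun t ht => by
    have h₁ := integral_nonpos_of_isEquilibrium hαs hα1 heq ht
    have h₂ := integral_nonpos_of_isEquilibrium (α := fun x => -αs x) hαs.neg
      (by simpa using hα1) heq.neg ht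
    rw [intervalIntegral.integral_neg] at h₂
    linarith
  exact ⟨hzero, ae_eq_zero_of_forall_integral_eq_zero
    (intervalIntegrable_of_abs_le hαs hα1 0 1) hzero⟩
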